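/- arXiv:2511.11095 — 2 statements merged into one kernel-verified Lean document; each statement's English description precedes it below -/
import Mathlib

section
/- Let a^{(1)}(θ_1), …, a^{(n)}(θ_n) be ground actions over O and g a set of atoms over O such that the iterated regression of g along the sequence is defined, yielding the regressed condition g_0. Let h : O → O' be an injective map fixing constants. Then for every state t over O' with h(g_0) ⊆ t, the renamed sequence a^{(1)}(h ∘ θ_1), …, a^{(n)}(h ∘ θ_n) is applicable from t and h(g) ⊆ succ(t, a^{(1)}(h ∘ θ_1) … a^{(n)}(h ∘ θ_n)). (Soundness of instantiating a rule lifted from a regressed plan on any state satisfying the renamed condition.) -/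
/-- A (lifted) STRIPS domain: predicate symbols with arities, constants, and action schemata,
each schema with a set of parameter variables and precondition/add/delete sets of predicates
whose arguments are variables of the schema or constants. -/
structure StripsDomain where
  Pred : Type
  arity : Pred → ℕ
  Const : Type
  Schema : Type
  Var : Schema → Type
  pre : (a : Schema) → Set ((p : Pred) × (Fin (arity p) → Var a ⊕ Const))
  add : (a : Schema) → Set ((p : Pred) × (Fin (arity p) → Var a ⊕ Const))
  del : (a : Schema) → Set ((p : Pred) × (Fin (arity p) → Var a ⊕ Const))

variable (D : StripsDomain)

/-- A ground atom over an object type `O`: a predicate applied to objects. -/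
abbrev GAtom (O : Type*) : Type _ := (p : D.Pred) × (Fin (D.arity p) → O)

/-- A ground action over `O`: a schema together with an assignment of objects to its
parameter variables. -/
abbrev GAction (O : Type*) : Type _ := (a : D.Schema) × (D.Var a → O)

/-- Instantiate a schema atom with the assignment `θ`, interpreting constants via `κ`. -/
def instAtom {O : Type*} (κ : D.Const → O) {a : D.Schema} (θ : D.Var a → O)
    (x : (p : D.Pred) × (Fin (D.arity p) → D.Var a ⊕ D.Const)) : GAtom D O :=
  ⟨x.1, fun i => Sum.elim θ κ (x.2 i)⟩

/-- Precondition set of atoms of a ground action. -/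
def gpre {O : Type*} (κ : D.Const → O) (ga : GAction D O) : Set (GAtom D O) :=
  instAtom D κ ga.2 '' D.pre ga.1

/-- Add set of atoms of a ground action. -/
def gadd {O : Type*} (κ : D.Const → O) (ga : GAction D O) : Set (GAtom D O) :=
  instAtom D κ ga.2 '' D.add ga.1

/-- Delete set of atoms of a ground action. -/
def gdel {O : Type*} (κ : D.Const → O) (ga : GAction D O) : Set (GAtom D O) :=
  instAtom D κ ga.2 '' D.del ga.1

/-- A ground action is applicable in a state `s` if its precondition set is contained in `s`. -/
def GApplicable {O : Type*} (κ : D.Const → O) (s : Set (GAtom D O)) (ga : GAction D O) : Prop :=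
  gpre D κ ga ⊆ s

/-- Successor state of `s` under a ground action. -/
def gstep {O : Type*} (κ : D.Const → O) (s : Set (GAtom D O)) (ga : GAction D O) :
    Set (GAtom D O) :=
  (s \ gdel D κ ga) ∪ gadd D κ ga

/-- A renaming `h : O → O'` acting pointwise on ground atoms. -/
def mapAtom {O O' : Type*} (h : O → O') (x : GAtom D O) : GAtom D O' :=
  ⟨x.1, h ∘ x.2⟩

/-- A renaming `h : O → O'` acting on ground actions: `a(θ) ↦ a(h ∘ θ)`. -/
def mapAction {O O' : Type*} (h : O → O') (ga : GAction D O) : GAction D O' :=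
  ⟨ga.1, h ∘ ga.2⟩

/-- `g` is regressable over the ground action `ga`:
`(add set) ∩ g ≠ ∅` and `(delete set) ∩ g = ∅`. -/
def GRegressable {O : Type*} (κ : D.Const → O) (g : Set (GAtom D O)) (ga : GAction D O) : Prop :=
  (gadd D κ ga ∩ g).Nonempty ∧ gdel D κ ga ∩ g = ∅

/-- Regression of `g` over a ground action: `(g \ add set) ∪ precondition set`. -/
def gregr {O : Type*} (κ : D.Const → O) (g : Set (GAtom D O)) (ga : GAction D O) :
    Set (GAtom D O) :=
  (g \ gadd D κ ga) ∪ gpre D κ ga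

/-- `GIterRegr D κ l g g₀` : the iterated regression of `g` along the ground action sequence
`l = a₁, …, aₙ` is defined (setting `gₙ = g`, each `gᵢ` is regressable over `aᵢ` and
`g_{i-1} = regr(gᵢ, aᵢ)`), and its result is `g₀`. -/
inductive GIterRegr {O : Type*} (κ : D.Const → O) :
    List (GAction D O) → Set (GAtom D O) → Set (GAtom D O) → Prop
  | nil (g : Set (GAtom D O)) : GIterRegr κ [] g g
  | cons {ga : GAction D O} {l : List (GAction D O)} {g g₁ : Set (GAtom D O)} :
      GIterRegr κ l g g₁ → GRegressable D κ g₁ ga →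
      GIterRegr κ (ga :: l) g (gregr D κ g₁ ga)

/-- Final state after applying a sequence of ground actions. -/
def gsuccList {O : Type*} (κ : D.Const → O) :
    Set (GAtom D O) → List (GAction D O) → Set (GAtom D O)
  | s, [] => s
  | s, ga :: l => gsuccList κ (gstep D κ s ga) l

/-- The ground action sequence is applicable from `s`. -/
def gAppList {O : Type*} (κ : D.Const → O) : Set (GAtom D O) → List (GAction D O) → Prop
  | _, [] => True
  | s, ga :: l => gpre D κ ga ⊆ s ∧ gAppList κ (gstep D κ s ga) l

/-!
Renaming commutes with instantiating schemata because `h` fixes the constants, so the renamed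
plan has exactly the renamed precondition, add and delete sets. By induction along the plan,
`h(gᵢ)` is contained in the state reached by the first `i` renamed actions: an atom of
`h(g_{i+1})` is either added by the next action or lies in `h(gᵢ \ add)`, and since `h` is
injective it can only be deleted if its preimage is, which regressability excludes.
-/

section Renaming

variable {O O' : Type*} (κ : D.Const → O) (κ' : D.Const → O') {h : O → O'}

theorem mapAtom_instAtom (hconst : ∀ c, h (κ c) = κ' c) {a : D.Schema} (θ : D.Var a → O)
    (x : (p : D.Pred) × (Fin (D.arity p) → D.Var a ⊕ D.Const)) :
    mapAtom D h (instAtom D κ θ x) = instAtom D κ' (h ∘ θ) x := by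
  simp only [mapAtom, instAtom]
  refine congrArg (Sigma.mk x.1) (funext fun i => ?_)
  cases hx : x.2 i <;> simp [hx, hconst]

theorem mapAtom_image_instAtom_image (hconst : ∀ c, h (κ c) = κ' c) {a : D.Schema}
    (θ : D.Var a → O) (S : Set ((p : D.Pred) × (Fin (D.arity p) → D.Var a ⊕ D.Const))) :
    mapAtom D h '' (instAtom D κ θ '' S) = instAtom D κ' (h ∘ θ) '' S := by
  rw [Set.image_image]
  exact Set.image_congr fun x _ => mapAtom_instAtom D κ κ' hconst θ x

theorem mapAtom_image_gpre (hconst : ∀ c, h (κ c) = κ' c) (ga : GAction D O) :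
    mapAtom D h '' gpre D κ ga = gpre D κ' (mapAction D h ga) :=
  mapAtom_image_instAtom_image D κ κ' hconst ga.2 _

theorem mapAtom_image_gadd (hconst : ∀ c, h (κ c) = κ' c) (ga : GAction D O) :
    mapAtom D h '' gadd D κ ga = gadd D κ' (mapAction D h ga) :=
  mapAtom_image_instAtom_image D κ κ' hconst ga.2 _

theorem mapAtom_image_gdel (hconst : ∀ c, h (κ c) = κ' c) (ga : GAction D O) :
    mapAtom D h '' gdel D κ ga = gdel D κ' (mapAction D h ga) :=
  mapAtom_image_instAtom_image D κ κ' hconst ga.2 _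

theorem mapAtom_injective (hinj : Function.Injective h) : Function.Injective (mapAtom D h) := by
  rintro ⟨p, f⟩ ⟨q, f'⟩ he
  obtain ⟨rfl, he⟩ := Sigma.ext_iff.mp he
  exact Sigma.ext rfl (heq_of_eq (hinj.comp_left (eq_of_heq he)))

theorem gpre_mapAction_subset_of_image_gregr_subset (hconst : ∀ c, h (κ c) = κ' c)
    {g : Set (GAtom D O)} {ga : GAction D O} {t : Set (GAtom D O')}
    (ht : mapAtom D h '' gregr D κ g ga ⊆ t) : gpre D κ' (mapAction D h ga) ⊆ t := by
  rw [← mapAtom_image_gpre D κ κ' hconst]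
  exact (Set.image_mono Set.subset_union_right).trans ht

theorem image_subset_gstep_mapAction_of_image_gregr_subset (hinj : Function.Injective h)
    (hconst : ∀ c, h (κ c) = κ' c) {g : Set (GAtom D O)} {ga : GAction D O}
    (hdel : Disjoint (gdel D κ ga) g) {t : Set (GAtom D O')}
    (ht : mapAtom D h '' gregr D κ g ga ⊆ t) :
    mapAtom D h '' g ⊆ gstep D κ' t (mapAction D h ga) := by
  have hkept : mapAtom D h '' (g \ gadd D κ ga) ⊆ t :=
    (Set.image_mono Set.subset_union_left).trans ht
  have hnotDel : Disjoint (mapAtom D h '' (g \ gadd D κ ga)) (gdel D κ' (mapAction D h ga)) := by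
    rw [← mapAtom_image_gdel D κ κ' hconst, Set.disjoint_image_iff (mapAtom_injective D hinj)]
    exact hdel.symm.mono_left Set.sdiff_subset
  calc mapAtom D h '' g
      ⊆ mapAtom D h '' (g \ gadd D κ ga) ∪ mapAtom D h '' gadd D κ ga := by
        rw [← Set.image_union]
        exact Set.image_mono (Set.subset_sdiff_union _ _)
    _ ⊆ gstep D κ' t (mapAction D h ga) := by
        rw [gstep, mapAtom_image_gadd D κ κ' hconst]
        exact Set.union_subset_union_left _ (Set.subset_sdiff.mpr ⟨hkept, hnotDel⟩)

end Renaming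

/-- Soundness of instantiating a rule lifted from a regressed plan: if the iterated regression
of `g` along `a⁽¹⁾(θ₁), …, a⁽ⁿ⁾(θₙ)` is defined with result `g₀`, and `h : O → O'` is injective
and fixes constants, then for every state `t` over `O'` with `h(g₀) ⊆ t`, the renamed sequence
`a⁽¹⁾(h ∘ θ₁), …, a⁽ⁿ⁾(h ∘ θₙ)` is applicable from `t` and `h(g)` is contained in the final
state. -/
theorem stmt7 {O O' : Type*} (κ : D.Const → O) (κ' : D.Const → O')
    (h : O → O') (hinj : Function.Injective h) (hconst : ∀ c, h (κ c) = κ' c)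
    (l : List (GAction D O)) (g g₀ : Set (GAtom D O))
    (hreg : GIterRegr D κ l g g₀)
    (t : Set (GAtom D O')) (ht : mapAtom D h '' g₀ ⊆ t) :
    gAppList D κ' t (l.map (mapAction D h)) ∧
      mapAtom D h '' g ⊆ gsuccList D κ' t (l.map (mapAction D h)) := by
  induction hreg generalizing t with
  | nil g => exact ⟨trivial, ht⟩
  | cons _ hregable ih =>
    obtain ⟨happ, hsub⟩ := ih _ (image_subset_gstep_mapAction_of_image_gregr_subset D κ κ' hinj
      hconst (Set.disjoint_iff_inter_eq_empty.mpr hregable.2) ht)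
    exact ⟨⟨gpre_mapAction_subset_of_image_gregr_subset D κ κ' hconst ht, happ⟩, hsub⟩
end

section
/- Let s_0 be a state and for i = 1, …, n let α_i be a sequence of ground STRIPS actions applicable from s_{i−1} with s_i = succ(s_{i−1}, α_i), and let g_1, …, g_n be sets of atoms with g_i ⊆ s_i for each i. If for all i < j, every action a occurring in α_j satisfies del(a) ∩ g_i = ∅, then g_i ⊆ s_n for all i, and the concatenation α_1; …; α_n is a plan for (s_0, g_1 ∪ … ∪ g_n). (Goals achieved in sequence are retained, so the greedy goal-decomposition of a conjunctive goal yields a valid plan.) -/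
/-- A ground STRIPS action: a triple of sets of atoms. -/
structure GAct (α : Type*) where
  pre : Set α
  add : Set α
  del : Set α

/-- The successor state of `s` under action `a` (when `a` is applicable, i.e. `a.pre ⊆ s`). -/
def gsucc {α : Type*} (s : Set α) (a : GAct α) : Set α :=
  (s \ a.del) ∪ a.add

/-- Final state after applying a sequence of actions. -/
def succList {α : Type*} : Set α → List (GAct α) → Set α
  | s, [] => s
  | s, a :: l => succList (gsucc s a) l

/-- The action sequence is applicable from `s`:
each action is applicable in the successively progressed state. -/
def AppList {α : Type*} : Set α → List (GAct α) → Prop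
  | _, [] => True
  | s, a :: l => a.pre ⊆ s ∧ AppList (gsucc s a) l

/-! An atom of `g i` lies in `s (i+1)` and no later action deletes it, so it survives every later
stage. Running the concatenated plan from `s 0` passes through `s 1, …, s n`, which gives
applicability and identifies its final state with `s n`. -/

section

variable {α : Type*}

theorem succList_append (l₁ l₂ : List (GAct α)) (s : Set α) :
    succList s (l₁ ++ l₂) = succList (succList s l₁) l₂ := by
  induction l₁ generalizing s with
  | nil => rfl
  | cons a l ih => exact ih _

theorem appList_append_iff (l₁ l₂ : List (GAct α)) (s : Set α) :
    AppList s (l₁ ++ l₂) ↔ AppList s l₁ ∧ AppList (succList s l₁) l₂ := by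
  induction l₁ generalizing s with
  | nil => simp [AppList, succList]
  | cons a l ih => simp only [List.cons_append, AppList, succList, ih, and_assoc]

theorem subset_succList_of_del_inter_eq_empty {G s : Set α} {l : List (GAct α)} (hG : G ⊆ s)
    (hdel : ∀ a ∈ l, a.del ∩ G = ∅) : G ⊆ succList s l := by
  induction l generalizing s with
  | nil => exact hG
  | cons a l ih =>
    have hkeep : G ⊆ gsucc s a := fun x hx =>
      Or.inl ⟨hG hx, fun hxa => (hdel a List.mem_cons_self).subset ⟨hxa, hx⟩⟩
    exact ih hkeep fun b hb => hdel b (List.mem_cons_of_mem _ hb)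

section Chain

variable {n : ℕ} (s : Fin (n + 1) → Set α) (acts : Fin n → List (GAct α))

theorem succList_flatten_ofFn
    (hstep : ∀ i : Fin n, s i.succ = succList (s i.castSucc) (acts i)) :
    succList (s 0) (List.ofFn acts).flatten = s (Fin.last n) := by
  induction n with
  | zero => rfl
  | succ n ih =>
    have hinit := ih (fun i => s i.castSucc) _ fun i => hstep i.castSucc
    rw [Fin.castSucc_zero] at hinit
    rw [List.ofFn_succ', List.concat_eq_append, List.flatten_append, succList_append, hinit,
      List.flatten_singleton, ← hstep, Fin.succ_last]

theorem appList_flatten_ofFn (happ : ∀ i : Fin n, AppList (s i.castSucc) (acts i))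
    (hstep : ∀ i : Fin n, s i.succ = succList (s i.castSucc) (acts i)) :
    AppList (s 0) (List.ofFn acts).flatten := by
  induction n with
  | zero => trivial
  | succ n ih =>
    have hinit := succList_flatten_ofFn (fun i => s i.castSucc) _ fun i => hstep i.castSucc
    have happ_init :=
      ih (fun i => s i.castSucc) _ (fun i => happ i.castSucc) fun i => hstep i.castSucc
    rw [Fin.castSucc_zero] at hinit happ_init
    rw [List.ofFn_succ', List.concat_eq_append, List.flatten_append, appList_append_iff, hinit,
      List.flatten_singleton]
    exact ⟨happ_init, happ (Fin.last n)⟩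

theorem subset_of_le_of_del_inter_eq_empty
    (hstep : ∀ i : Fin n, s i.succ = succList (s i.castSucc) (acts i)) {G : Set α}
    {i : Fin (n + 1)} (hG : G ⊆ s i)
    (hdel : ∀ j : Fin n, i ≤ j.castSucc → ∀ a ∈ acts j, a.del ∩ G = ∅)
    {k : Fin (n + 1)} (hik : i ≤ k) : G ⊆ s k := by
  induction k using Fin.induction with
  | zero => rwa [nonpos_iff_eq_zero.mp hik] at hG
  | succ k ih =>
    rcases hik.eq_or_lt with rfl | hlt
    · exact hG
    · have hik' : i ≤ k.castSucc := Fin.le_castSucc_iff.mpr hlt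
      rw [hstep k]
      exact subset_succList_of_del_inter_eq_empty (ih hik') (hdel k hik')

end Chain

end

/-- Goals achieved in sequence are retained: let `s₀ = s 0` and for `i = 1, …, n` let `acts i`
be applicable from the previous state with `s` progressing accordingly, and let `g i ⊆ s i` be
goal sets achieved along the way. If for all `i < j` every action of `acts j` deletes nothing
of `g i`, then every `g i` is contained in the final state, and the concatenation of the
`acts i` is a plan for `(s 0, ⋃ i, g i)`. -/
theorem stmt14 {α : Type*} {n : ℕ} (s : Fin (n + 1) → Set α)
    (acts : Fin n → List (GAct α)) (g : Fin n → Set α)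
    (happ : ∀ i : Fin n, AppList (s i.castSucc) (acts i))
    (hstep : ∀ i : Fin n, s i.succ = succList (s i.castSucc) (acts i))
    (hg : ∀ i : Fin n, g i ⊆ s i.succ)
    (hdel : ∀ i j : Fin n, i < j → ∀ a ∈ acts j, a.del ∩ g i = ∅) :
    (∀ i : Fin n, g i ⊆ s (Fin.last n)) ∧
      AppList (s 0) (List.ofFn acts).flatten ∧
      (⋃ i : Fin n, g i) ⊆ succList (s 0) (List.ofFn acts).flatten := by
  have hretained (i : Fin n) : g i ⊆ s (Fin.last n) :=
    subset_of_le_of_del_inter_eq_empty s acts hstep (hg i)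
      (fun j hij => hdel i j (Fin.succ_le_castSucc_iff.mp hij)) (Fin.le_last _)
  refine ⟨hretained, appList_flatten_ofFn s acts happ hstep, ?_⟩
  rw [succList_flatten_ofFn s acts hstep]
  exact Set.iUnion_subset hretained
end
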